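/- arXiv:2305.06879 — 3 statements merged into one kernel-verified Lean document; each statement's English description precedes it below -/
import Mathlib

section
/- For any quaternion vectors p, q : Fin n → ℍ, the sum over μ ∈ {1, i, j, k} of ∑_{l} conj((p_l)^μ) · (q_l)^μ equals 4·re(∑_{l} conj(p_l) · q_l), coerced into ℍ; i.e., the augmented quaternion vectors satisfy p_H^H q_H = 4 Re{p^H q}. -/
open Quaternion

noncomputable def qI : ℍ[ℝ] := ⟨0, 1, 0, 0⟩
noncomputable def qJ : ℍ[ℝ] := ⟨0, 0, 1, 0⟩
noncomputable def qK : ℍ[ℝ] := ⟨0, 0, 0, 1⟩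

/-- The quaternion involution `q^μ = μ q μ⁻¹ = -μ q μ` for a pure unit quaternion `μ`. -/
noncomputable def qInv (μ q : ℍ[ℝ]) : ℍ[ℝ] := -(μ * q * μ)

/-!
For a pure unit quaternion `μ` the map `q ↦ q^μ = μ q μ⁻¹` is an inner automorphism commuting
with conjugation, so `conj(a^μ) b^μ = (conj(a) b)^μ`, and the left-hand side is
`x + x^i + x^j + x^k` with `x = p^H q`. Each `q ↦ q^μ` fixes `re q` and the `μ`-component of `q` and
negates the other two imaginary components, so the imaginary parts cancel in the sum.
-/

@[simp] lemma qI_re : qI.re = 0 := rfl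
@[simp] lemma qI_imI : qI.imI = 1 := rfl
@[simp] lemma qI_imJ : qI.imJ = 0 := rfl
@[simp] lemma qI_imK : qI.imK = 0 := rfl
@[simp] lemma qJ_re : qJ.re = 0 := rfl
@[simp] lemma qJ_imI : qJ.imI = 0 := rfl
@[simp] lemma qJ_imJ : qJ.imJ = 1 := rfl
@[simp] lemma qJ_imK : qJ.imK = 0 := rfl
@[simp] lemma qK_re : qK.re = 0 := rfl
@[simp] lemma qK_imI : qK.imI = 0 := rfl
@[simp] lemma qK_imJ : qK.imJ = 0 := rfl
@[simp] lemma qK_imK : qK.imK = 1 := rfl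

lemma star_qI : star qI = -qI := by ext <;> simp
lemma star_qJ : star qJ = -qJ := by ext <;> simp
lemma star_qK : star qK = -qK := by ext <;> simp

lemma qI_mul_self : qI * qI = -1 := by ext <;> simp [re_mul, imI_mul, imJ_mul, imK_mul]
lemma qJ_mul_self : qJ * qJ = -1 := by ext <;> simp [re_mul, imI_mul, imJ_mul, imK_mul]
lemma qK_mul_self : qK * qK = -1 := by ext <;> simp [re_mul, imI_mul, imJ_mul, imK_mul]

lemma qInv_sum {ι : Type*} (μ : ℍ[ℝ]) (s : Finset ι) (f : ι → ℍ[ℝ]) :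
    qInv μ (∑ i ∈ s, f i) = ∑ i ∈ s, qInv μ (f i) := by
  simp only [qInv, Finset.mul_sum, Finset.sum_mul, Finset.sum_neg_distrib]

lemma star_qInv_mul_qInv {μ : ℍ[ℝ]} (hμ : star μ = -μ) (hμμ : μ * μ = -1) (a b : ℍ[ℝ]) :
    star (qInv μ a) * qInv μ b = qInv μ (star a * b) := by
  calc star (qInv μ a) * qInv μ b = μ * star a * (μ * μ) * b * μ := by
        simp only [qInv, star_neg, star_mul, hμ]; noncomm_ring
    _ = qInv μ (star a * b) := by rw [hμμ, qInv]; noncomm_ring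

lemma add_qInv_qI_add_qInv_qJ_add_qInv_qK (x : ℍ[ℝ]) :
    x + qInv qI x + qInv qJ x + qInv qK x = ((4 * x.re : ℝ) : ℍ[ℝ]) := by
  ext <;> simp [qInv, re_mul, imI_mul, imJ_mul, imK_mul]
  ring

/-- `p_H^H q_H = 4 Re{p^H q}`: the sum over `μ ∈ {1,i,j,k}` of
`∑ l, conj((p l)^μ) * (q l)^μ` equals `4 Re{∑ l, conj(p l) * q l}`, coerced into ℍ. -/
theorem augmented_conjTranspose_dot (n : ℕ) (p q : Fin n → ℍ[ℝ]) :
    (∑ l, star (p l) * q l)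
      + (∑ l, star (qInv qI (p l)) * qInv qI (q l))
      + (∑ l, star (qInv qJ (p l)) * qInv qJ (q l))
      + (∑ l, star (qInv qK (p l)) * qInv qK (q l))
    = ((4 * (∑ l, star (p l) * q l).re : ℝ) : ℍ[ℝ]) := by
  simp only [star_qInv_mul_qInv star_qI qI_mul_self, star_qInv_mul_qInv star_qJ qJ_mul_self,
    star_qInv_mul_qInv star_qK qK_mul_self, ← qInv_sum]
  exact add_qInv_qI_add_qInv_qJ_add_qInv_qK _
end

section
/- (Quaternion minimum variance beamforming.) Let R ∈ ℍ^{n×n} be Hermitian (Rᴴ = R) and positive definite (re(xᴴ R x) > 0 for all nonzero x ∈ ℍ^n), hence invertible, and let a ∈ ℍ^n be nonzero. Then r := re(aᴴ R⁻¹ a) > 0, and the vector w̄ = (1/r) • (R⁻¹·a) satisfies the constraint w̄ᴴ a = 1 and is optimal: for every w ∈ ℍ^n with wᴴ a = 1, re(w̄ᴴ R w̄) ≤ re(wᴴ R w). -/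
open Quaternion Matrix

private noncomputable def qmv {n : ℕ} (M : Matrix (Fin n) (Fin n) ℍ[ℝ]) :
    (Fin n → ℍ[ℝ]) →ₗ[ℝ] (Fin n → ℍ[ℝ]) where
  toFun := M.mulVec
  map_add' x y := M.mulVec_add x y
  map_smul' r x := M.mulVec_smul r x

private theorem qherm_key {n : ℕ} (M : Matrix (Fin n) (Fin n) ℍ[ℝ]) (hM : Mᴴ = M)
    (x y : Fin n → ℍ[ℝ]) :
    star (star x ⬝ᵥ M.mulVec y) = star y ⬝ᵥ M.mulVec x := by
  rw [Matrix.star_dotProduct, star_star, Matrix.star_mulVec, ← Matrix.dotProduct_mulVec, hM]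

/-- Quaternion minimum variance beamforming: for a Hermitian positive definite `R` (hence
invertible, with inverse `Rinv`) and a nonzero steering vector `a`, the real number
`r = re(aᴴ R⁻¹ a)` is positive, and `w̄ = (1/r) • (R⁻¹ a)` satisfies `w̄ᴴ a = 1` and
minimizes `re(wᴴ R w)` among all `w` with `wᴴ a = 1`. -/
theorem quaternion_min_variance_beamforming (n : ℕ) (R : Matrix (Fin n) (Fin n) ℍ[ℝ])
    (hR : Rᴴ = R) (hpd : ∀ x : Fin n → ℍ[ℝ], x ≠ 0 → 0 < (star x ⬝ᵥ R.mulVec x).re)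
    (a : Fin n → ℍ[ℝ]) (ha : a ≠ 0) :
    ∃ Rinv : Matrix (Fin n) (Fin n) ℍ[ℝ], R * Rinv = 1 ∧ Rinv * R = 1 ∧
      0 < (star a ⬝ᵥ Rinv.mulVec a).re ∧
      star ((1 / (star a ⬝ᵥ Rinv.mulVec a).re) • Rinv.mulVec a) ⬝ᵥ a = 1 ∧
      ∀ w : Fin n → ℍ[ℝ], star w ⬝ᵥ a = 1 →
        (star ((1 / (star a ⬝ᵥ Rinv.mulVec a).re) • Rinv.mulVec a) ⬝ᵥ
            R.mulVec ((1 / (star a ⬝ᵥ Rinv.mulVec a).re) • Rinv.mulVec a)).re ≤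
          (star w ⬝ᵥ R.mulVec w).re := by
  -- the ℝ-linear endomorphism given by R is injective
  have hinj : Function.Injective (qmv R) := by
    rw [injective_iff_map_eq_zero]
    intro x hx
    by_contra hx0
    have := hpd x hx0
    rw [show R.mulVec x = 0 from hx] at this
    simp at this
  have hsurj : Function.Surjective (qmv R) :=
    LinearMap.injective_iff_surjective.mp hinj
  let e : (Fin n → ℍ[ℝ]) ≃ₗ[ℝ] (Fin n → ℍ[ℝ]) :=
    LinearEquiv.ofBijective (qmv R) ⟨hinj, hsurj⟩
  have he : ∀ x, e x = R.mulVec x := fun _ => rfl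
  -- the inverse map commutes with right scalar multiplication
  have hcomm : ∀ (q : ℍ[ℝ]) (y : Fin n → ℍ[ℝ]),
      e.symm (fun i => y i * q) = fun i => e.symm y i * q := by
    intro q y
    apply hinj
    show qmv R (e.symm _) = qmv R _
    have h1 : qmv R (e.symm (fun i => y i * q)) = fun i => y i * q := by
      have := e.apply_symm_apply (fun i => y i * q); rwa [he] at this
    have h2 : (qmv R) (fun i => e.symm y i * q) = fun i => y i * q := by
      show R.mulVec _ = _
      funext i
      simp only [Matrix.mulVec, dotProduct, ← mul_assoc, ← Finset.sum_mul]
      congr 1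
      have := e.apply_symm_apply y; rw [he] at this
      exact congrFun this i
    rw [h1, h2]
  -- the inverse matrix
  set Rinv : Matrix (Fin n) (Fin n) ℍ[ℝ] :=
    Matrix.of (fun i j => e.symm (Pi.single j 1) i) with hRinv
  have hmv : ∀ x, Rinv.mulVec x = e.symm x := by
    intro x
    have hx : x = ∑ j, (fun i => (Pi.single j 1 : Fin n → ℍ[ℝ]) i * x j) := by
      funext i
      simp [Pi.single_apply, Finset.sum_ite_eq', ite_mul]
    conv_rhs => rw [hx]
    rw [map_sum]
    funext i
    rw [Finset.sum_apply]
    simp only [Matrix.mulVec, dotProduct, hRinv, Matrix.of_apply]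
    refine Finset.sum_congr rfl fun j _ => ?_
    rw [hcomm (x j) (Pi.single j 1)]
  have hRe : ∀ x, R.mulVec (e.symm x) = x := by
    intro x; have := e.apply_symm_apply x; rwa [he] at this
  have heR : ∀ x, e.symm (R.mulVec x) = x := by
    intro x; have := e.symm_apply_apply x; rwa [he] at this
  have h1 : R * Rinv = 1 := by
    refine Matrix.ext fun i j => ?_
    have h := congrFun (by rw [← Matrix.mulVec_mulVec, hmv, hRe] :
      (R * Rinv).mulVec (Pi.single j 1) = Pi.single j 1) i
    simpa [Matrix.one_apply, Pi.single_apply] using h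
  have h2 : Rinv * R = 1 := by
    refine Matrix.ext fun i j => ?_
    have h := congrFun (by rw [← Matrix.mulVec_mulVec, hmv, heR] :
      (Rinv * R).mulVec (Pi.single j 1) = Pi.single j 1) i
    simpa [Matrix.one_apply, Pi.single_apply] using h
  -- Rinv is Hermitian
  have hRinvH : Rinvᴴ = Rinv := by
    calc Rinvᴴ = Rinvᴴ * (R * Rinv) := by rw [h1, mul_one]
    _ = (Rinvᴴ * Rᴴ) * Rinv := by rw [hR, mul_assoc]
    _ = (R * Rinv)ᴴ * Rinv := by rw [Matrix.conjTranspose_mul]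
    _ = Rinv := by rw [h1, Matrix.conjTranspose_one, one_mul]
  set u : Fin n → ℍ[ℝ] := Rinv.mulVec a with hu
  set q : ℍ[ℝ] := star a ⬝ᵥ u with hq
  have hau : R.mulVec u = a := by rw [hu, Matrix.mulVec_mulVec, h1, Matrix.one_mulVec]
  have hune : u ≠ 0 := by
    intro h0
    apply ha
    rw [← hau, h0, Matrix.mulVec_zero]
  have hquu : q = star u ⬝ᵥ R.mulVec u := by
    conv_lhs => rw [hq, ← hau]
    rw [Matrix.star_mulVec, ← Matrix.dotProduct_mulVec, hR]
  have hrpos : 0 < q.re := by rw [hquu]; exact hpd u hune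
  have hqstar : star q = q := qherm_key Rinv hRinvH a a
  have hqre : q = ((q.re : ℝ) : ℍ[ℝ]) := Quaternion.star_eq_self.mp hqstar
  have hrne : q.re ≠ 0 := ne_of_gt hrpos
  -- the constraint
  have hconstraint : star ((1 / q.re) • u) ⬝ᵥ a = 1 := by
    have hsu : star ((1 / q.re) • u) = (1 / q.re) • star u := by
      funext i; simp
    rw [hsu, smul_dotProduct]
    have : star u ⬝ᵥ a = ((q.re : ℝ) : ℍ[ℝ]) := by
      rw [Matrix.star_dotProduct, ← hq, hqstar, hqre]; rfl
    rw [this, Quaternion.smul_coe, one_div, inv_mul_cancel₀ hrne, Quaternion.coe_one]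
  refine ⟨Rinv, h1, h2, hrpos, hconstraint, ?_⟩
  intro w hw
  set wb : Fin n → ℍ[ℝ] := (1 / q.re) • u with hwb
  set d : Fin n → ℍ[ℝ] := w - wb with hd
  have hwdecomp : w = wb + d := by rw [hd, add_sub_cancel]
  -- a ⊥ d
  have had : star a ⬝ᵥ d = 0 := by
    have h3 : star a ⬝ᵥ w = 1 := by
      rw [Matrix.star_dotProduct, hw, star_one]
    have h4 : star a ⬝ᵥ wb = 1 := by
      rw [Matrix.star_dotProduct, hconstraint, star_one]
    rw [hd, dotProduct_sub, h3, h4, sub_self]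
  -- cross terms vanish
  have hcross : star wb ⬝ᵥ R.mulVec d = 0 := by
    have hud : star u ⬝ᵥ R.mulVec d = 0 := by
      rw [hu, Matrix.star_mulVec, hRinvH, ← Matrix.dotProduct_mulVec,
        Matrix.mulVec_mulVec, h2, Matrix.one_mulVec, had]
    have hsu : star wb = (1 / q.re) • star u := by
      funext i; simp [hwb]
    rw [hsu, smul_dotProduct, hud, smul_zero]
  have hcross2 : star d ⬝ᵥ R.mulVec wb = 0 := by
    rw [← qherm_key R hR wb d, hcross, star_zero]
  have hdpos : 0 ≤ (star d ⬝ᵥ R.mulVec d).re := by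
    rcases eq_or_ne d 0 with h0 | h0
    · simp [h0]
    · exact (hpd d h0).le
  have hexpand : (star w ⬝ᵥ R.mulVec w).re =
      (star wb ⬝ᵥ R.mulVec wb).re + (star d ⬝ᵥ R.mulVec d).re := by
    rw [hwdecomp]
    simp only [star_add, add_dotProduct, Matrix.mulVec_add, dotProduct_add]
    rw [hcross, hcross2]
    simp [Quaternion.re_add]
  show (star wb ⬝ᵥ R.mulVec wb).re ≤ (star w ⬝ᵥ R.mulVec w).re
  rw [hexpand]
  linarith
end

section
/- (Quaternion linear minimum mean-square error filter.) Let R ∈ ℍ^{n×n} be Hermitian (Rᴴ = R) and positive definite (re(xᴴ R x) > 0 for all nonzero x ∈ ℍ^n), hence invertible, let p ∈ ℍ^n, and let σ_d² ∈ ℝ. Define J : ℍ^n → ℝ by J(w) = re(wᴴ R w − pᴴ w − wᴴ p) + σ_d². Then w̄ = R⁻¹·p is a global minimizer of J: for every w ∈ ℍ^n, J(w̄) ≤ J(w). -/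
open Quaternion Matrix

/-! Completing the square: if `R w̄ = p` with `R` Hermitian, then
`J(w) - J(w̄) = re((w - w̄)ᴴ R (w - w̄))`, which is nonnegative by positive definiteness.
Such a `w̄` exists because `R` is invertible: `xᴴ R = 0` would give `re(xᴴ R x) = 0`, so `vecMul`
is injective, hence bijective over the division ring `ℍ`. -/

namespace Matrix

variable {ι : Type*} [Fintype ι]

theorem exists_inverse_of_vecMul_injective {K : Type*} [DivisionRing K] [DecidableEq ι]
    {A : Matrix ι ι K} (hA : Function.Injective A.vecMul) :
    ∃ B : Matrix ι ι K, A * B = 1 ∧ B * A = 1 := by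
  have hsurj : Function.Surjective A.vecMul :=
    LinearMap.surjective_of_injective (f := A.vecMulLinear) hA
  obtain ⟨B, hBA⟩ := vecMul_surjective_iff_exists_left_inverse.mp hsurj
  exact ⟨B, mul_eq_one_comm.mp hBA, hBA⟩

section Quaternion

variable {𝕜 : Type*} [Field 𝕜] [LinearOrder 𝕜] [IsStrictOrderedRing 𝕜] {A : Matrix ι ι ℍ[𝕜]}

theorem vecMul_injective_of_re_pos (hA : ∀ x, x ≠ 0 → 0 < (star x ⬝ᵥ A *ᵥ x).re) :
    Function.Injective A.vecMul := by
  refine (injective_iff_map_eq_zero A.vecMulLinear).mpr fun x hx ↦ ?_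
  by_contra hx₀
  have hpos := hA (star x) (star_ne_zero.mpr hx₀)
  rw [star_star, dotProduct_mulVec, show x ᵥ* A = 0 from hx, zero_dotProduct] at hpos
  exact hpos.false

theorem re_dotProduct_mulVec_nonneg (hA : ∀ x, x ≠ 0 → 0 < (star x ⬝ᵥ A *ᵥ x).re)
    (x : ι → ℍ[𝕜]) : 0 ≤ (star x ⬝ᵥ A *ᵥ x).re := by
  rcases eq_or_ne x 0 with rfl | hx
  · simp
  · exact (hA x hx).le

end Quaternion

/-- The cost `J` less its constant term `σ_d²`. -/
def quadraticCost {K : Type*} [Ring K] [StarRing K] (A : Matrix ι ι K) (p w : ι → K) : K :=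
  star w ⬝ᵥ A *ᵥ w - star p ⬝ᵥ w - star w ⬝ᵥ p

theorem quadraticCost_sub_quadraticCost {K : Type*} [Ring K] [StarRing K] {A : Matrix ι ι K}
    (hA : A.IsHermitian) {w₀ p : ι → K} (hp : A *ᵥ w₀ = p) (w : ι → K) :
    quadraticCost A p w - quadraticCost A p w₀ = star (w - w₀) ⬝ᵥ A *ᵥ (w - w₀) := by
  have hstar_p : ∀ v, star p ⬝ᵥ v = star w₀ ⬝ᵥ A *ᵥ v := fun v ↦ by
    rw [← hp, star_mulVec, hA.eq, ← dotProduct_mulVec]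
  rw [quadraticCost, quadraticCost, hstar_p w, hstar_p w₀, ← hp]
  simp only [star_sub, mulVec_sub, sub_dotProduct, dotProduct_sub]
  abel

end Matrix

/-- Quaternion linear minimum mean-square error filter: for a Hermitian positive definite
input correlation matrix `R` (hence invertible, with inverse `Rinv`), cross-correlation
vector `p` and desired-signal power `σd2`, the weight vector `w̄ = R⁻¹ p` globally
minimizes the MSE cost `J(w) = re(wᴴ R w − pᴴ w − wᴴ p) + σd2`. -/
theorem quaternion_mmse_filter (n : ℕ) (R : Matrix (Fin n) (Fin n) ℍ[ℝ])
    (hR : Rᴴ = R) (hpd : ∀ x : Fin n → ℍ[ℝ], x ≠ 0 → 0 < (star x ⬝ᵥ R.mulVec x).re)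
    (p : Fin n → ℍ[ℝ]) (σd2 : ℝ) :
    ∃ Rinv : Matrix (Fin n) (Fin n) ℍ[ℝ], R * Rinv = 1 ∧ Rinv * R = 1 ∧
      ∀ w : Fin n → ℍ[ℝ],
        (star (Rinv.mulVec p) ⬝ᵥ R.mulVec (Rinv.mulVec p)
            - star p ⬝ᵥ Rinv.mulVec p - star (Rinv.mulVec p) ⬝ᵥ p).re + σd2 ≤
          (star w ⬝ᵥ R.mulVec w - star p ⬝ᵥ w - star w ⬝ᵥ p).re + σd2 := by
  have hinj : Function.Injective R.vecMul := vecMul_injective_of_re_pos hpd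
  obtain ⟨Rinv, hRRinv, hRinvR⟩ := exists_inverse_of_vecMul_injective hinj
  refine ⟨Rinv, hRRinv, hRinvR, fun w ↦ ?_⟩
  have hsolve : R *ᵥ (Rinv *ᵥ p) = p := by rw [mulVec_mulVec, hRRinv, one_mulVec]
  have hgap : 0 ≤ (quadraticCost R p w - quadraticCost R p (Rinv *ᵥ p)).re := by
    rw [quadraticCost_sub_quadraticCost hR hsolve w]
    exact re_dotProduct_mulVec_nonneg hpd _
  rw [re_sub, sub_nonneg] at hgap
  exact add_le_add_left hgap σd2
end
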